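/- Let R be a commutative integral domain and M a virtually regular R-module. Then the torsion submodule T(M) is virtually regular and the quotient module M/T(M) is virtually regular. -/

import Mathlib

/-! A summand `N ≅ R t` with `t` torsion consists of torsion elements, so it is a summand of
`T(M)` by the modular law. For `m ∉ T(M)` over a domain, `R m` meets `T(M)` trivially, hence so does
a summand `N ≅ R m`; the projection `M → M/T(M)` is then injective on both, and it maps a
complement `N'` of `N` to a complement of the image of `N`, because `r (a - b) = 0` with `a ∈ N`,
`b ∈ N'` forces `r a = r b ∈ N ⊓ N' = 0`. -/

/-- A submodule is a direct summand if it has a complement. -/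
def Submodule.IsDirectSummand {R M : Type*} [Ring R] [AddCommGroup M] [Module R M]
    (N : Submodule R M) : Prop :=
  ∃ N' : Submodule R M, IsCompl N N'

/-- A module is virtually regular if every cyclic submodule is isomorphic to a
direct summand. -/
def VirtuallyRegular (R M : Type*) [Ring R] [AddCommGroup M] [Module R M] : Prop :=
  ∀ m : M, ∃ N : Submodule R M, N.IsDirectSummand ∧
    Nonempty ((Submodule.span R {m}) ≃ₗ[R] N)

open Submodule

section Ring

variable {R M M₂ : Type*} [Ring R] [AddCommGroup M] [Module R M] [AddCommGroup M₂] [Module R M₂]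

theorem Submodule.IsDirectSummand.comap_subtype {N P : Submodule R M} (hN : N.IsDirectSummand)
    (hle : N ≤ P) : (N.comap P.subtype).IsDirectSummand :=
  let ⟨N', h⟩ := hN
  ⟨N'.comap P.subtype, isCompl_comap_subtype_of_isCompl_of_le h hle⟩

noncomputable def Submodule.equivMapOfDisjointKer (f : M →ₗ[R] M₂) (N : Submodule R M)
    (hd : Disjoint N (LinearMap.ker f)) : N ≃ₗ[R] N.map f :=
  (LinearEquiv.ofInjective (f.domRestrict N) (LinearMap.injective_domRestrict_iff.mpr hd)).trans
    (LinearEquiv.ofEq _ _ (LinearMap.range_domRestrict N f))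

noncomputable def Submodule.spanSingletonEquivSpanCoe {P : Submodule R M} (x : P) :
    (R ∙ x) ≃ₗ[R] (R ∙ (x : M)) :=
  ((R ∙ x).equivMapOfInjective P.subtype P.injective_subtype).trans
    (LinearEquiv.ofEq _ _ (map_subtype_span_singleton x))

theorem VirtuallyRegular.submodule (h : VirtuallyRegular R M) {P : Submodule R M}
    (hP : ∀ x ∈ P, ∀ N : Submodule R M, ((R ∙ x) ≃ₗ[R] N) → N ≤ P) :
    VirtuallyRegular R P := by
  intro x
  obtain ⟨N, hN, ⟨e⟩⟩ := h x
  have hle : N ≤ P := hP x x.2 N e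
  exact ⟨N.comap P.subtype, hN.comap_subtype hle,
    ⟨(spanSingletonEquivSpanCoe x).trans (e.trans (comapSubtypeEquivOfLe hle).symm)⟩⟩

end Ring

section CommRing

variable {R M M₂ : Type*} [CommRing R] [AddCommGroup M] [Module R M] [AddCommGroup M₂]
  [Module R M₂]

theorem Submodule.comap_torsion_of_injective {f : M →ₗ[R] M₂} (hf : Function.Injective f) :
    (torsion R M₂).comap f = torsion R M := by
  ext x
  simp only [mem_comap, mem_torsion_iff, Submonoid.smul_def, ← map_smul]
  exact exists_congr fun a => hf.eq_iff' (map_zero f)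

theorem Submodule.le_torsion_iff {N : Submodule R M} : N ≤ torsion R M ↔ torsion R N = ⊤ := by
  rw [← comap_subtype_eq_top, comap_torsion_of_injective N.injective_subtype]

theorem Submodule.disjoint_torsion_iff {N : Submodule R M} :
    Disjoint N (torsion R M) ↔ torsion R N = ⊥ := by
  rw [disjoint_iff_comap_eq_bot, comap_torsion_of_injective N.injective_subtype]

theorem Submodule.le_torsion_of_equiv {P N : Submodule R M} (e : P ≃ₗ[R] N)
    (hP : P ≤ torsion R M) : N ≤ torsion R M := by
  rw [le_torsion_iff] at hP ⊢
  rw [← comap_torsion_of_injective (f := (e.symm : N →ₗ[R] P)) e.symm.injective, hP, comap_top]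

theorem Submodule.disjoint_torsion_of_equiv {P N : Submodule R M} (e : P ≃ₗ[R] N)
    (hP : Disjoint P (torsion R M)) : Disjoint N (torsion R M) := by
  rw [disjoint_torsion_iff] at hP ⊢
  rw [← comap_torsion_of_injective (f := (e.symm : N →ₗ[R] P)) e.symm.injective, hP, comap_bot,
    LinearEquiv.ker]

theorem Submodule.disjoint_span_singleton_torsion [IsDomain R] {m : M} (hm : m ∉ torsion R M) :
    Disjoint (R ∙ m) (torsion R M) := by
  rw [disjoint_def]
  rintro _ hz ⟨r, hr⟩
  obtain ⟨a, rfl⟩ := mem_span_singleton.mp hz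
  by_contra ha
  have hra : (r : R) * a ∈ nonZeroDivisors R := mem_nonZeroDivisors_of_ne_zero
    (mul_ne_zero (nonZeroDivisors.coe_ne_zero r) (left_ne_zero_of_smul ha))
  exact hm ⟨⟨_, hra⟩, by simpa [Submonoid.smul_def, mul_smul] using hr⟩

theorem Submodule.isCompl_map_mkQ_torsion {N N' : Submodule R M} (h : IsCompl N N') :
    IsCompl (N.map (torsion R M).mkQ) (N'.map (torsion R M).mkQ) := by
  constructor
  · rw [disjoint_def]
    rintro _ ⟨a, ha, rfl⟩ ⟨b, hb, hab⟩
    obtain ⟨r, hr⟩ : a - b ∈ torsion R M := by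
      rw [← ker_mkQ (torsion R M), LinearMap.mem_ker, map_sub, hab, sub_self]
    rw [Submonoid.smul_def, smul_sub, sub_eq_zero] at hr
    have hra : (r : R) • a = 0 :=
      h.disjoint.le_bot ⟨N.smul_mem _ ha, hr ▸ N'.smul_mem _ hb⟩
    exact (Quotient.mk_eq_zero _).mpr ⟨r, hra⟩
  · rw [codisjoint_iff, ← map_sup, h.sup_eq_top, map_top, range_mkQ]

theorem VirtuallyRegular.quotient_torsion [IsDomain R] (h : VirtuallyRegular R M) :
    VirtuallyRegular R (M ⧸ torsion R M) := by
  intro x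
  obtain ⟨m, rfl⟩ := (torsion R M).mkQ_surjective x
  by_cases hm : m ∈ torsion R M
  · have hx : (R ∙ (torsion R M).mkQ m) = ⊥ := by
      rw [span_singleton_eq_bot, mkQ_apply, Quotient.mk_eq_zero]
      exact hm
    exact ⟨⊥, ⟨⊤, isCompl_bot_top⟩, ⟨LinearEquiv.ofEq _ _ hx⟩⟩
  obtain ⟨N, ⟨N', hN⟩, ⟨e⟩⟩ := h m
  have hm_disj : Disjoint (R ∙ m) (torsion R M) := disjoint_span_singleton_torsion hm
  have hN_disj : Disjoint N (torsion R M) := disjoint_torsion_of_equiv e hm_disj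
  rw [← ker_mkQ (torsion R M)] at hm_disj hN_disj
  have hspan : (R ∙ m).map (torsion R M).mkQ = R ∙ (torsion R M).mkQ m := by
    rw [map_span, Set.image_singleton]
  exact ⟨N.map (torsion R M).mkQ, ⟨N'.map (torsion R M).mkQ, isCompl_map_mkQ_torsion hN⟩,
    ⟨(LinearEquiv.ofEq _ _ hspan).symm ≪≫ₗ (equivMapOfDisjointKer _ _ hm_disj).symm ≪≫ₗ e ≪≫ₗ
      equivMapOfDisjointKer _ _ hN_disj⟩⟩

theorem VirtuallyRegular.torsion (h : VirtuallyRegular R M) :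
    VirtuallyRegular R (Submodule.torsion R M) :=
  h.submodule fun _ hx _ e => le_torsion_of_equiv e (span_singleton_le_iff_mem _ _ |>.mpr hx)

end CommRing

/-- If `M` is a virtually regular module over a commutative domain, then its torsion
submodule `T(M)` and the quotient `M / T(M)` are virtually regular. -/
theorem torsion_and_quotient_virtuallyRegular {R M : Type*} [CommRing R] [IsDomain R]
    [AddCommGroup M] [Module R M] (h : VirtuallyRegular R M) :
    VirtuallyRegular R (Submodule.torsion R M) ∧
      VirtuallyRegular R (M ⧸ Submodule.torsion R M) :=
  ⟨.torsion h, .quotient_torsion h⟩
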